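/- arXiv:1104.2267 — 5 statements merged into one kernel-verified Lean document; each statement's English description precedes it below -/
import Mathlib

section
/- (Classical five-term relation) For real x, y with 0 < x, 0 < y, x + y < 1: \mathcal{L}(x) + \mathcal{L}(y) = \mathcal{L}\big(\tfrac{y}{1-x}\big) + \mathcal{L}\big(\tfrac{-xy}{1-x-y}\big) + \mathcal{L}\big(\tfrac{x}{1-y}\big). -/
open Real MeasureTheory intervalIntegral Set Filter Topology

/-- The dilogarithm `Li₂(x) = -∫₀ˣ log(1-t)/t dt` (real, defined for `x < 1` and extended
by the same integral formula). -/
noncomputable def Li2 (x : ℝ) : ℝ := -∫ t in (0:ℝ)..x, Real.log (1 - t) / t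

/-- The Rogers dilogarithm `L(z) = Li₂(z) + (1/2) log z log(1-z)` (with `Real.log` of a
negative number equal to the log of its absolute value, giving the appropriate extension). -/
noncomputable def rogersL (z : ℝ) : ℝ := Li2 z + (1 / 2) * Real.log z * Real.log (1 - z)

/-- `𝓛(z) = L(1/(1 - 1/z))`. -/
noncomputable def curlyL (z : ℝ) : ℝ := rogersL (1 / (1 - 1 / z))

/-- pointwise bound on the integrand -/
lemma li2_bound {w t : ℝ} (hw : w < 1) (ht : t ∈ Set.uIoc 0 w) :
    |Real.log (1 - t) / t| ≤ max 1 (1 - w)⁻¹ := by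
  rcases Set.mem_uIoc.1 ht with h | h
  · -- 0 < t ≤ w
    have ht0 : 0 < t := h.1
    have htw : t ≤ w := h.2
    have h1t : 0 < 1 - t := by linarith
    have h1w : 0 < 1 - w := by linarith
    have hlog : -Real.log (1 - t) ≤ t / (1 - t) := by
      have := Real.log_le_sub_one_of_pos (x := (1-t)⁻¹) (by positivity)
      rw [Real.log_inv] at this
      have : -Real.log (1-t) ≤ (1-t)⁻¹ - 1 := this
      calc -Real.log (1-t) ≤ (1-t)⁻¹ - 1 := this
        _ = t / (1-t) := by field_simp; ring
    have hlogneg : Real.log (1 - t) ≤ 0 :=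
      Real.log_nonpos (by linarith) (by linarith)
    have : |Real.log (1 - t) / t| = (-Real.log (1-t)) / t := by
      rw [abs_div, abs_of_nonpos hlogneg, abs_of_pos ht0]
    rw [this]
    have h2 : (-Real.log (1-t)) / t ≤ (1-t)⁻¹ := by
      rw [div_le_iff₀ ht0]
      calc -Real.log (1-t) ≤ t / (1-t) := hlog
        _ = (1-t)⁻¹ * t := by ring
    refine h2.trans (le_max_of_le_right ?_)
    exact inv_anti₀ h1w (by linarith)
  · -- w < t ≤ 0
    have ht0 : t ≤ 0 := h.2
    have ht0' : w < t := h.1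
    rcases eq_or_lt_of_le ht0 with rfl | htneg
    · simp
    · have h1t : 1 < 1 - t := by linarith
      have hlogpos : 0 ≤ Real.log (1 - t) := Real.log_nonneg (by linarith)
      have hlog : Real.log (1 - t) ≤ -t := by
        have := Real.log_le_sub_one_of_pos (x := 1 - t) (by linarith)
        linarith
      have : |Real.log (1 - t) / t| = Real.log (1-t) / (-t) := by
        rw [abs_div, abs_of_nonneg hlogpos, abs_of_neg htneg]
      rw [this]
      refine le_max_of_le_left ?_
      rw [div_le_one (by linarith)]
      exact hlog

lemma li2_integrand_measurable : Measurable (fun t : ℝ => Real.log (1 - t) / t) := by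
  exact (Real.measurable_log.comp (measurable_const.sub measurable_id)).div measurable_id

lemma li2_integrable {w : ℝ} (hw : w < 1) :
    IntervalIntegrable (fun t => Real.log (1 - t) / t) volume 0 w := by
  rw [intervalIntegrable_iff]
  apply Measure.integrableOn_of_bounded (M := max 1 (1 - w)⁻¹)
  · exact (measure_Ioc_lt_top).ne
  · exact li2_integrand_measurable.aestronglyMeasurable
  · filter_upwards [ae_restrict_mem measurableSet_uIoc]
    intro t ht
    rw [Real.norm_eq_abs]
    exact li2_bound hw ht

lemma li2_hasDerivAt {w : ℝ} (hw : w < 1) (hw0 : w ≠ 0) :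
    HasDerivAt Li2 (-(Real.log (1 - w) / w)) w := by
  have hopen : IsOpen {t : ℝ | t ≠ 0 ∧ t < 1} := by
    have : {t : ℝ | t ≠ 0 ∧ t < 1} = {(0:ℝ)}ᶜ ∩ Set.Iio 1 := by ext t; simp [Set.mem_setOf_eq]
    rw [this]; exact (isOpen_compl_singleton).inter isOpen_Iio
  have hmem : w ∈ {t : ℝ | t ≠ 0 ∧ t < 1} := ⟨hw0, hw⟩
  have hcont : ContinuousAt (fun t => Real.log (1 - t) / t) w := by
    apply ContinuousAt.div
    · exact (Real.continuousAt_log (by linarith)).comp (continuous_const.sub continuous_id).continuousAt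
    · exact continuousAt_id
    · exact hw0
  have h := intervalIntegral.integral_hasDerivAt_right (li2_integrable hw)
    li2_integrand_measurable.aestronglyMeasurable.stronglyMeasurableAtFilter
    hcont
  exact h.neg

lemma li2_tendsto_zero : Filter.Tendsto Li2 (𝓝 0) (𝓝 0) := by
  have hb : ∀ w ∈ Set.Ioo (-(1/2):ℝ) (1/2), |Li2 w| ≤ 2 * |w| := by
    intro w hw
    have h1 : ∀ t ∈ Set.uIoc (0:ℝ) w, ‖Real.log (1 - t) / t‖ ≤ 2 := by
      intro t ht
      have := li2_bound (w := w) (by linarith [hw.2]) ht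
      rw [Real.norm_eq_abs]
      refine this.trans ?_
      have : (1 - w)⁻¹ ≤ 2 := by
        rw [inv_le_comm₀ (by linarith [hw.2]) (by norm_num)]
        linarith [hw.1, hw.2]
      simp [this]
    have h2 := intervalIntegral.norm_integral_le_of_norm_le_const h1
    rw [sub_zero, Real.norm_eq_abs] at h2
    rw [show Li2 w = -∫ t in (0:ℝ)..w, Real.log (1-t)/t from rfl, abs_neg]
    exact h2
  rw [Metric.tendsto_nhds_nhds]
  intro ε hε
  refine ⟨min (1/2) (ε/2), by positivity, fun {w} hw => ?_⟩
  have hw2 : |w| < 1/2 := lt_of_lt_of_le (by simpa [Real.dist_eq] using hw) (min_le_left _ _)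
  have hwε : |w| < ε/2 := lt_of_lt_of_le (by simpa [Real.dist_eq] using hw) (min_le_right _ _)
  have hmem : w ∈ Set.Ioo (-(1/2):ℝ) (1/2) := abs_lt.1 hw2 |>.imp (fun h => h) (fun h => h) |> fun h => ⟨h.1, h.2⟩
  have := hb w hmem
  rw [Real.dist_eq, sub_zero]
  calc |Li2 w| ≤ 2 * |w| := this
    _ < 2 * (ε/2) := by linarith
    _ = ε := by ring

lemma rogersL_hasDerivAt {w : ℝ} (hw : w < 1) (hw0 : w ≠ 0) :
    HasDerivAt rogersL
      (-(1/2) * (Real.log (1 - w) / w + Real.log w / (1 - w))) w := by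
  have h1w : (1:ℝ) - w ≠ 0 := by intro h; nlinarith [h]
  have hlog1 : HasDerivAt (fun z : ℝ => Real.log z) w⁻¹ w := Real.hasDerivAt_log hw0
  have hsub : HasDerivAt (fun z : ℝ => 1 - z) (-1) w := by
    simpa using (hasDerivAt_id w).const_sub 1
  have hlog2 : HasDerivAt (fun z : ℝ => Real.log (1 - z)) (-(1-w)⁻¹) w := by
    have := (Real.hasDerivAt_log h1w).comp w hsub
    simpa [Function.comp_def] using this
  have hmul : HasDerivAt (fun z : ℝ => (1/2 : ℝ) * Real.log z * Real.log (1 - z))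
      ((1/2) * (w⁻¹ * Real.log (1-w) + Real.log w * (-(1-w)⁻¹))) w := by
    have := ((hlog1.const_mul (1/2 : ℝ)).mul hlog2)
    refine this.congr_deriv ?_
    ring
  have := (li2_hasDerivAt hw hw0).add hmul
  have heq : -(Real.log (1 - w) / w) + (1/2) * (w⁻¹ * Real.log (1-w) + Real.log w * (-(1-w)⁻¹))
      = -(1/2) * (Real.log (1 - w) / w + Real.log w / (1 - w)) := by
    field_simp
    ring
  rw [heq] at this
  exact this

lemma curlyL_hasDerivAt {z : ℝ} (hz : z < 1) (hz0 : z ≠ 0) :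
    HasDerivAt curlyL ((1/2) * (Real.log (1 - z) / z + Real.log z / (1 - z))) z := by
  have hz1 : z - 1 ≠ 0 := by intro h; nlinarith
  have h1z : (0:ℝ) < 1 - z := by linarith
  -- inner function h(z) = 1/(1 - 1/z) = (1 - z⁻¹)⁻¹
  have hu : HasDerivAt (fun t : ℝ => 1 - t⁻¹) (z⁻¹^2) z := by
    have := (hasDerivAt_inv hz0).const_sub 1
    refine this.congr_deriv ?_
    field_simp
  have hune : 1 - z⁻¹ ≠ 0 := by
    rw [sub_ne_zero]
    intro h
    have : z * 1 = z * z⁻¹ := by rw [h]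
    rw [mul_inv_cancel₀ hz0] at this
    simp at this; exact absurd this (ne_of_lt hz)
  have hh : HasDerivAt (fun t : ℝ => 1 / (1 - 1/t)) (-((1 - z⁻¹)^2)⁻¹ * z⁻¹^2) z := by
    have := ((hasDerivAt_inv hune).comp z hu)
    simpa [one_div, Function.comp_def] using this
  set w := 1 / (1 - 1/z) with hwdef
  have hwz : w = z / (z - 1) := by
    rw [hwdef]
    field_simp
  have hw0 : w ≠ 0 := by
    rw [hwz]; exact div_ne_zero hz0 hz1
  have hw1 : w < 1 := by
    have h : w - 1 = (z-1)⁻¹ := by rw [hwz]; field_simp; ring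
    have : (z-1)⁻¹ < 0 := inv_lt_zero.2 (by linarith)
    linarith [h ▸ this]
  have hcomp := (rogersL_hasDerivAt hw1 hw0).comp z hh
  have : curlyL = fun t => rogersL (1 / (1 - 1/t)) := rfl
  rw [this]
  refine hcomp.congr_deriv ?_
  symm
  -- value equality
  have h1w : 1 - w = (1 - z)⁻¹ := by
    rw [hwz]; field_simp; ring
  have hlogw : Real.log w = Real.log z - Real.log (1 - z) := by
    rw [hwz, Real.log_div hz0 hz1, show z - 1 = -(1 - z) by ring, Real.log_neg_eq_log]
  have hlog1w : Real.log (1 - w) = -Real.log (1 - z) := by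
    rw [h1w, Real.log_inv]
  have h1z' : (1:ℝ) - z ≠ 0 := ne_of_gt h1z
  rw [hlogw, hlog1w, h1w, hwz]
  field_simp
  ring

lemma abslog_tendsto : Tendsto (fun w : ℝ => abs (Real.log (abs w) * abs w)) (𝓝[≠] (0:ℝ)) (𝓝 0) := by
  have h : Tendsto (fun t : ℝ => Real.log t * t) (𝓝[>] (0:ℝ)) (𝓝 0) := by
    have := tendsto_log_mul_rpow_nhdsGT_zero (r := 1) one_pos
    simpa using this
  have habs : Tendsto (fun w : ℝ => |w|) (𝓝[≠] (0:ℝ)) (𝓝[>] (0:ℝ)) :=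
    tendsto_abs_nhdsNE_zero
  have := (h.comp habs).abs
  simpa using this

lemma rogersL_tendsto_zero : Tendsto rogersL (𝓝[≠] (0:ℝ)) (𝓝 0) := by
  have h1 : Tendsto Li2 (𝓝[≠] (0:ℝ)) (𝓝 0) := li2_tendsto_zero.mono_left nhdsWithin_le_nhds
  have h2 : Tendsto (fun w : ℝ => (1/2 : ℝ) * Real.log w * Real.log (1-w)) (𝓝[≠] (0:ℝ)) (𝓝 0) := by
    refine squeeze_zero_norm' ?_ abslog_tendsto
    have hmem : Set.Ioo (-(1/2) : ℝ) (1/2) ∈ 𝓝[≠] (0:ℝ) :=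
      nhdsWithin_le_nhds (Ioo_mem_nhds (by norm_num) (by norm_num))
    filter_upwards [hmem, self_mem_nhdsWithin] with w hw hw0
    have hwne : w ≠ 0 := hw0
    have hlog1w : |Real.log (1 - w)| ≤ 2 * |w| := by
      rcases le_or_gt 0 w with h | h
      · have hw2 : w < 1/2 := hw.2
        have h1w : 0 < 1 - w := by linarith
        have hneg : Real.log (1 - w) ≤ 0 := Real.log_nonpos (by linarith) (by linarith)
        have : -Real.log (1-w) ≤ w / (1-w) := by
          have := Real.log_le_sub_one_of_pos (x := (1-w)⁻¹) (by positivity)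
          rw [Real.log_inv] at this
          have h2 : (1-w)⁻¹ - 1 = w / (1-w) := by field_simp; ring
          linarith [h2 ▸ this]
        have hb : w / (1 - w) ≤ 2 * w := by
          rw [div_le_iff₀ h1w]; nlinarith
        rw [abs_of_nonpos hneg, abs_of_nonneg h]
        linarith
      · have hpos : 0 ≤ Real.log (1 - w) := Real.log_nonneg (by linarith)
        have : Real.log (1 - w) ≤ -w := by
          have := Real.log_le_sub_one_of_pos (x := 1 - w) (by linarith)
          linarith
        rw [abs_of_nonneg hpos, abs_of_neg h]
        linarith
    rw [Real.norm_eq_abs, Real.log_abs, abs_mul, abs_mul, abs_mul, abs_abs,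
      show |(1/2 : ℝ)| = 1/2 by norm_num]
    calc (1/2) * |Real.log w| * |Real.log (1-w)| ≤ (1/2) * |Real.log w| * (2 * |w|) := by
          apply mul_le_mul_of_nonneg_left hlog1w (by positivity)
      _ = |Real.log w| * |w| := by ring
  have : rogersL = fun w => Li2 w + (1/2 : ℝ) * Real.log w * Real.log (1-w) := rfl
  rw [this]
  have h3 := h1.add h2
  rw [add_zero] at h3
  exact h3

lemma tendsto_curlyL_zero : Tendsto curlyL (𝓝[≠] (0:ℝ)) (𝓝 0) := by
  have hg : Tendsto (fun z : ℝ => z / (z - 1)) (𝓝[≠] (0:ℝ)) (𝓝[≠] (0:ℝ)) := by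
    rw [tendsto_nhdsWithin_iff]
    constructor
    · have : ContinuousAt (fun z : ℝ => z / (z - 1)) 0 := by
        apply ContinuousAt.div continuousAt_id (continuousAt_id.sub continuousAt_const)
        norm_num
      simpa using this.tendsto.mono_left nhdsWithin_le_nhds
    · filter_upwards [self_mem_nhdsWithin, nhdsWithin_le_nhds (Ioo_mem_nhds (show (-(1:ℝ)/2) < 0 by norm_num) (show (0:ℝ) < 1/2 by norm_num))] with z hz0 hz
      have : z - 1 ≠ 0 := by intro h; have := hz.2; rw [sub_eq_zero] at h; norm_num [h] at this
      exact div_ne_zero hz0 this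
  have := rogersL_tendsto_zero.comp hg
  apply this.congr'
  filter_upwards [self_mem_nhdsWithin] with z hz0
  show rogersL (z / (z-1)) = curlyL z
  have hzz : z ≠ 0 := hz0
  have : (1 : ℝ) / (1 - 1/z) = z / (z - 1) := by
    rw [show (1:ℝ) - 1/z = (z-1)/z by field_simp, one_div_div]
  rw [curlyL, this]

lemma fiveF_hasDerivAt {x y : ℝ} (hx : 0 < x) (hy : 0 < y) (hxy : x + y < 1) :
    HasDerivAt (fun t => curlyL t + curlyL y - curlyL (y/(1-t))
      - curlyL (-(t*y)/(1-t-y)) - curlyL (t/(1-y))) 0 x := by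
  have hx1 : x < 1 := by linarith
  have hx0 : x ≠ 0 := ne_of_gt hx
  have h1x : (0:ℝ) < 1 - x := by linarith
  have h1y : (0:ℝ) < 1 - y := by linarith
  have hs : (0:ℝ) < 1 - x - y := by linarith
  have h1xne : (1:ℝ) - x ≠ 0 := ne_of_gt h1x
  have h1yne : (1:ℝ) - y ≠ 0 := ne_of_gt h1y
  have hsne : (1:ℝ) - x - y ≠ 0 := ne_of_gt hs
  have hyne : y ≠ 0 := ne_of_gt hy
  -- term 1
  have h1 := curlyL_hasDerivAt hx1 hx0
  -- term 3 : y/(1-t)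
  have hu : HasDerivAt (fun t : ℝ => y/(1-t)) (y * ((1-x)^2)⁻¹) x := by
    have hsub : HasDerivAt (fun t : ℝ => 1 - t) (-1) x := by
      simpa using (hasDerivAt_id x).const_sub 1
    have h' := ((hasDerivAt_inv h1xne).comp x hsub).const_mul y
    have heq : y * (-((1 - x) ^ 2)⁻¹ * -1) = y * ((1-x)^2)⁻¹ := by ring
    rw [heq] at h'
    simpa [Function.comp, div_eq_mul_inv] using h'
  have ha : y/(1-x) < 1 := by rw [div_lt_one h1x]; linarith
  have hane : y/(1-x) ≠ 0 := div_ne_zero hyne h1xne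
  have h3 := (curlyL_hasDerivAt ha hane).comp x hu
  -- term 4 : -(t*y)/(1-t-y)
  have hv : HasDerivAt (fun t : ℝ => -(t*y)/(1-t-y))
      (-y * (1-x-y)⁻¹ + (-(x*y)) * ((1-x-y)^2)⁻¹) x := by
    have hnum : HasDerivAt (fun t : ℝ => -(t*y)) (-y) x := by
      have := ((hasDerivAt_id x).mul_const y).neg
      simp only [id, one_mul] at this
      exact this
    have hden : HasDerivAt (fun t : ℝ => 1 - t - y) (-1) x := by
      simpa using ((hasDerivAt_id x).const_sub 1).sub_const y
    have hinv : HasDerivAt (fun t : ℝ => (1 - t - y)⁻¹) (((1-x-y)^2)⁻¹) x := by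
      have h' := (hasDerivAt_inv hsne).comp x hden
      have heq : -((1-x-y)^2)⁻¹ * -1 = ((1-x-y)^2)⁻¹ := by ring
      rw [heq] at h'
      simpa [Function.comp_def] using h'
    have h'' := hnum.mul hinv
    simpa [div_eq_mul_inv, Pi.mul_def] using h''
  have hb : -(x*y)/(1-x-y) < 1 := by
    apply lt_of_lt_of_le _ (le_of_lt one_pos)
    · apply div_neg_of_neg_of_pos _ hs
      nlinarith
  have hbne : -(x*y)/(1-x-y) ≠ 0 := by
    apply div_ne_zero _ hsne
    nlinarith
  have h4 := (curlyL_hasDerivAt hb hbne).comp x hv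
  -- term 5 : t/(1-y)
  have hc : HasDerivAt (fun t : ℝ => t/(1-y)) ((1-y)⁻¹) x := by
    simpa [div_eq_mul_inv] using (hasDerivAt_id x).mul_const (1-y)⁻¹
  have hcarg : x/(1-y) < 1 := by rw [div_lt_one h1y]; linarith
  have hcne : x/(1-y) ≠ 0 := div_ne_zero hx0 h1yne
  have h5 := (curlyL_hasDerivAt hcarg hcne).comp x hc
  have hcomb := (((h1.add (hasDerivAt_const x (curlyL y))).sub h3).sub h4).sub h5
  refine hcomb.congr_deriv ?_
  symm
  -- now prove the derivative value is 0
  have e2 : (1:ℝ) - y/(1-x) = (1-x-y)/(1-x) := by field_simp; try ring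
  have e4 : (1:ℝ) - -(x*y)/(1-x-y) = ((1-x)*(1-y))/(1-x-y) := by field_simp; try ring
  have e6 : (1:ℝ) - x/(1-y) = (1-x-y)/(1-y) := by field_simp; try ring
  have l1 : Real.log (y/(1-x)) = Real.log y - Real.log (1-x) := Real.log_div hyne h1xne
  have l2 : Real.log (1 - y/(1-x)) = Real.log (1-x-y) - Real.log (1-x) := by
    rw [e2, Real.log_div hsne h1xne]
  have l3 : Real.log (-(x*y)/(1-x-y)) = Real.log x + Real.log y - Real.log (1-x-y) := by
    rw [show -(x*y)/(1-x-y) = -((x*y)/(1-x-y)) by ring, Real.log_neg_eq_log,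
      Real.log_div (by positivity) hsne, Real.log_mul hx0 hyne]
  have l4 : Real.log (1 - -(x*y)/(1-x-y))
      = Real.log (1-x) + Real.log (1-y) - Real.log (1-x-y) := by
    rw [e4, Real.log_div (by positivity) hsne, Real.log_mul h1xne h1yne]
  have l5 : Real.log (x/(1-y)) = Real.log x - Real.log (1-y) := Real.log_div hx0 h1yne
  have l6 : Real.log (1 - x/(1-y)) = Real.log (1-x-y) - Real.log (1-y) := by
    rw [e6, Real.log_div hsne h1yne]
  rw [l1, l2, l3, l4, l5, l6, e2, e4, e6]
  field_simp
  ring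

/-- The classical five-term dilogarithm relation: for `0 < x`, `0 < y`, `x + y < 1`,
`𝓛(x) + 𝓛(y) = 𝓛(y/(1-x)) + 𝓛(-xy/(1-x-y)) + 𝓛(x/(1-y))`. -/
theorem five_term_relation (x y : ℝ) (hx : 0 < x) (hy : 0 < y) (hxy : x + y < 1) :
    curlyL x + curlyL y
      = curlyL (y / (1 - x)) + curlyL (-(x * y) / (1 - x - y)) + curlyL (x / (1 - y)) := by
  have h1y : (0:ℝ) < 1 - y := by linarith
  set F : ℝ → ℝ := fun t => curlyL t + curlyL y - curlyL (y/(1-t))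
      - curlyL (-(t*y)/(1-t-y)) - curlyL (t/(1-y)) with hF
  suffices h : F x = 0 by
    have : curlyL x + curlyL y - curlyL (y/(1-x)) - curlyL (-(x*y)/(1-x-y)) - curlyL (x/(1-y)) = 0 := h
    linarith
  -- F has zero derivative on Ioo 0 (1-y)
  have hder : ∀ t ∈ Set.Ioo (0:ℝ) (1-y), HasDerivAt F 0 t := by
    intro t ht
    exact fiveF_hasDerivAt ht.1 hy (by linarith [ht.2])
  -- F is constant on Ioo 0 (1-y)
  have hconst : ∀ t ∈ Set.Ioo (0:ℝ) (1-y), F t = F x := by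
    intro t ht
    apply Convex.is_const_of_fderivWithin_eq_zero (convex_Ioo (0:ℝ) (1-y))
      (𝕜 := ℝ) (fun u hu => ((hder u hu).differentiableAt).differentiableWithinAt)
      (fun u hu => ?_) ht ⟨hx, by linarith⟩
    rw [fderivWithin_of_isOpen isOpen_Ioo hu]
    have h0 : HasFDerivAt F (0 : ℝ →L[ℝ] ℝ) u := by
      have := (hder u hu).hasFDerivAt
      simpa using this
    exact h0.fderiv
  -- limits along 𝓝[>] 0
  set l := 𝓝[>] (0:ℝ) with hl
  have hlne : l ≤ 𝓝[≠] (0:ℝ) := nhdsWithin_mono _ (fun t ht => ne_of_gt ht)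
  have hIoo : Set.Ioo (0:ℝ) (1-y) ∈ l := Ioo_mem_nhdsGT_of_mem ⟨le_refl _, h1y⟩
  have t1 : Tendsto curlyL l (𝓝 0) := tendsto_curlyL_zero.mono_left hlne
  have hy1 : y < 1 := by linarith
  have t3 : Tendsto (fun t : ℝ => curlyL (y/(1-t))) l (𝓝 (curlyL y)) := by
    have hcy : ContinuousAt curlyL y := (curlyL_hasDerivAt hy1 (ne_of_gt hy)).continuousAt
    have hinner : Tendsto (fun t : ℝ => y/(1-t)) l (𝓝 y) := by
      have : ContinuousAt (fun t : ℝ => y/(1-t)) 0 := by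
        apply ContinuousAt.div continuousAt_const (continuousAt_const.sub continuousAt_id)
        norm_num
      have h := this.tendsto.mono_left (hl ▸ nhdsWithin_le_nhds)
      simpa using h
    exact hcy.tendsto.comp hinner
  have t4 : Tendsto (fun t : ℝ => curlyL (-(t*y)/(1-t-y))) l (𝓝 0) := by
    apply tendsto_curlyL_zero.comp
    rw [tendsto_nhdsWithin_iff]
    constructor
    · have : ContinuousAt (fun t : ℝ => -(t*y)/(1-t-y)) 0 := by
        apply ContinuousAt.div
        · exact ((continuousAt_id.mul continuousAt_const)).neg
        · exact (continuousAt_const.sub continuousAt_id).sub continuousAt_const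
        · simpa using ne_of_gt h1y
      have h := this.tendsto.mono_left (hl ▸ nhdsWithin_le_nhds)
      simpa using h
    · filter_upwards [hIoo] with t ht
      have : -(t*y)/(1-t-y) < 0 :=
        div_neg_of_neg_of_pos (by nlinarith [ht.1]) (by linarith [ht.2])
      exact ne_of_lt this
  have t5 : Tendsto (fun t : ℝ => curlyL (t/(1-y))) l (𝓝 0) := by
    apply tendsto_curlyL_zero.comp
    rw [tendsto_nhdsWithin_iff]
    constructor
    · have : ContinuousAt (fun t : ℝ => t/(1-y)) 0 := by
        apply ContinuousAt.div continuousAt_id continuousAt_const (ne_of_gt h1y)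
      have h := this.tendsto.mono_left (hl ▸ nhdsWithin_le_nhds)
      simpa using h
    · filter_upwards [hIoo] with t ht
      exact ne_of_gt (div_pos ht.1 h1y)
  have hFlim : Tendsto F l (𝓝 (0 + curlyL y - curlyL y - 0 - 0)) := by
    exact (((t1.add tendsto_const_nhds).sub t3).sub t4).sub t5
  have hFlim' : Tendsto F l (𝓝 (F x)) := by
    apply Tendsto.congr' _ (tendsto_const_nhds (x := F x))
    filter_upwards [hIoo] with t ht
    exact (hconst t ht).symm
  have := tendsto_nhds_unique hFlim' hFlim
  rw [this]; ring
end

section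
/- If yx = qxy, then the quintuple Y_1 = y, Y_2 = x^{-1}(q-y), Y_3 = -q x^{-1}(q-x-y)y^{-1}, Y_4 = (q-x)y^{-1}, Y_5 = x satisfies the commutation relations Y_{t+1} Y_t = q\, Y_t Y_{t+1} for all t \in \mathbb{Z}/5\mathbb{Z}. -/
theorem qY_aux {R : Type*} [Ring R] (q p x a y b : R)
    (hq : ∀ r : R, q * r = r * q)
    (hpq : p * q = 1) (hqp : q * p = 1)
    (hxa : x * a = 1) (hax : a * x = 1)
    (hyb : y * b = 1) (hby : b * y = 1)
    (hxy : y * x = q * (x * y)) :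
    ((a*(q-y)) * y = q * (y * (a*(q-y)))) ∧
    ((-(q*(a*((q-x-y)*b)))) * (a*(q-y)) = q * ((a*(q-y)) * (-(q*(a*((q-x-y)*b)))))) ∧
    (((q-x)*b) * (-(q*(a*((q-x-y)*b)))) = q * ((-(q*(a*((q-x-y)*b)))) * ((q-x)*b))) ∧
    (x * ((q-x)*b) = q * (((q-x)*b) * x)) := by
  have hp : ∀ r : R, p * r = r * p := by
    intro r
    calc p * r = p * r * (q * p) := by rw [hqp, mul_one]
    _ = p * (r * q) * p := by noncomm_ring
    _ = p * (q * r) * p := by rw [hq]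
    _ = (p * q) * (r * p) := by noncomm_ring
    _ = r * p := by rw [hpq, one_mul]
  -- centrality moves
  have mq : ∀ r c : R, r * (q * c) = q * (r * c) := fun r c => by
    rw [← mul_assoc, ← hq, mul_assoc]
  have mq0 : ∀ r : R, r * q = q * r := fun r => (hq r).symm
  have mp : ∀ r c : R, r * (p * c) = p * (r * c) := fun r c => by
    rw [← mul_assoc, ← hp, mul_assoc]
  have mp0 : ∀ r : R, r * p = p * r := fun r => (hp r).symm
  -- swap rules
  have s2 : a * y = q * (y * a) := by
    calc a * y = a * y * (x * a) := by rw [hxa, mul_one]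
    _ = a * (y * x) * a := by noncomm_ring
    _ = a * (q * (x * y)) * a := by rw [hxy]
    _ = q * ((a * x) * (y * a)) := by simp only [mul_assoc, mq]
    _ = q * (y * a) := by rw [hax, one_mul]
  have s3 : x * b = q * (b * x) := by
    calc x * b = b * (y * x) * b := by rw [show b * (y * x) * b = (b*y) * (x*b) by noncomm_ring, hby, one_mul]
    _ = b * (q * (x * y)) * b := by rw [hxy]
    _ = q * ((b * x) * (y * b)) := by simp only [mul_assoc, mq]
    _ = q * (b * x) := by rw [show (b*x)*(y*b) = b*(x*(y*b)) from by noncomm_ring] at *; rw [show y*b = 1 from hyb, mul_one]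
  have s4 : b * a = q * (a * b) := by
    calc b * a = b * (a * y) * b := by rw [show b * (a*y) * b = (b*a) * (y*b) by noncomm_ring, hyb, mul_one]
    _ = b * (q * (y * a)) * b := by rw [s2]
    _ = q * ((b * y) * (a * b)) := by simp only [mul_assoc, mq]
    _ = q * (a * b) := by rw [show (b*y)*(a*b) = b*y*(a*b) from rfl]; rw [hby, one_mul]
  have s5 : y * a = p * (a * y) := by
    rw [s2, ← mul_assoc, hpq, one_mul]
  -- tail versions
  have s1' : ∀ c : R, y * (x * c) = q * (x * (y * c)) := fun c => by
    rw [← mul_assoc, hxy]; noncomm_ring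
  have s3r : b * x = p * (x * b) := by
    rw [s3, ← mul_assoc, hpq, one_mul]
  have s3r' : ∀ c : R, b * (x * c) = p * (x * (b * c)) := fun c => by
    rw [← mul_assoc, s3r]; noncomm_ring
  have s4' : ∀ c : R, b * (a * c) = q * (a * (b * c)) := fun c => by
    rw [← mul_assoc, s4]; noncomm_ring
  have s5' : ∀ c : R, y * (a * c) = p * (a * (y * c)) := fun c => by
    rw [← mul_assoc, s5]; noncomm_ring
  -- cancellations, tail versions
  have cxa : ∀ c : R, x * (a * c) = c := fun c => by rw [← mul_assoc, hxa, one_mul]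
  have cax : ∀ c : R, a * (x * c) = c := fun c => by rw [← mul_assoc, hax, one_mul]
  have cyb : ∀ c : R, y * (b * c) = c := fun c => by rw [← mul_assoc, hyb, one_mul]
  have cby : ∀ c : R, b * (y * c) = c := fun c => by rw [← mul_assoc, hby, one_mul]
  have cpq : ∀ c : R, p * (q * c) = c := fun c => by rw [← mul_assoc, hpq, one_mul]
  have cqp : ∀ c : R, q * (p * c) = c := fun c => by rw [← mul_assoc, hqp, one_mul]
  refine ⟨?_, ?_, ?_, ?_⟩ <;>
  · simp only [mul_sub, sub_mul, mul_add, add_mul, neg_mul, mul_neg, mul_one, one_mul,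
      mul_assoc, s1', hxy, s3r', s3r, s4', s4, s5', s5, cxa, cax, cyb, cby, cpq, cqp,
      hxa, hax, hyb, hby, hpq, hqp, mq, mq0, mp, mp0]
    try abel

/-- If `y x = q x y` with `q` central and invertible and `x`, `y` invertible, then the quintuple
`Y₁ = y`, `Y₂ = x⁻¹(q - y)`, `Y₃ = -q x⁻¹ (q - x - y) y⁻¹`, `Y₄ = (q - x) y⁻¹`, `Y₅ = x`
satisfies the commutation relations `Y_{t+1} Y_t = q Y_t Y_{t+1}` for all `t ∈ ℤ/5ℤ`
(here the index `0` plays the role of `5`). -/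
theorem qY_commutation {R : Type*} [Ring R] (q x y : R)
    (hq : ∀ r : R, q * r = r * q) (hqu : IsUnit q) (hxu : IsUnit x) (hyu : IsUnit y)
    (hxy : y * x = q * (x * y)) :
    let Y : ZMod 5 → R := ![x, y, Ring.inverse x * (q - y),
      -(q * (Ring.inverse x * ((q - x - y) * Ring.inverse y))), (q - x) * Ring.inverse y]
    ∀ t : ZMod 5, Y (t + 1) * Y t = q * (Y t * Y (t + 1)) := by
  obtain ⟨h1, h2, h3, h4⟩ := qY_aux q (Ring.inverse q) x (Ring.inverse x) y (Ring.inverse y)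
    hq (Ring.inverse_mul_cancel q hqu) (Ring.mul_inverse_cancel q hqu)
    (Ring.mul_inverse_cancel x hxu) (Ring.inverse_mul_cancel x hxu)
    (Ring.mul_inverse_cancel y hyu) (Ring.inverse_mul_cancel y hyu) hxy
  intro Y t
  fin_cases t
  · exact hxy
  · exact h1
  · exact h2
  · exact h3
  · exact h4
end

section
/- (qY-system of type (A_1,A_2)) If yx = qxy, then the quintuple Y_1 = y, Y_2 = x^{-1}(q-y), Y_3 = -q x^{-1}(q-x-y)y^{-1}, Y_4 = (q-x)y^{-1}, Y_5 = x satisfies Y_{t-1} Y_{t+1} = q - Y_t for all t \in \mathbb{Z}/5\mathbb{Z}. -/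
/-- The qY-system of type `(A₁, A₂)`: if `y x = q x y` with `q` central and invertible and
`x`, `y` invertible, then the quintuple `Y₁ = y`, `Y₂ = x⁻¹(q - y)`,
`Y₃ = -q x⁻¹ (q - x - y) y⁻¹`, `Y₄ = (q - x) y⁻¹`, `Y₅ = x` satisfies
`Y_{t-1} Y_{t+1} = q - Y_t` for all `t ∈ ℤ/5ℤ` (the index `0` plays the role of `5`). -/
theorem qY_system {R : Type*} [Ring R] (q x y : R)
    (hq : ∀ r : R, q * r = r * q) (hqu : IsUnit q) (hxu : IsUnit x) (hyu : IsUnit y)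
    (hxy : y * x = q * (x * y)) :
    let Y : ZMod 5 → R := ![x, y, Ring.inverse x * (q - y),
      -(q * (Ring.inverse x * ((q - x - y) * Ring.inverse y))), (q - x) * Ring.inverse y]
    ∀ t : ZMod 5, Y (t - 1) * Y (t + 1) = q - Y t := by
  intro Y t
  set a := Ring.inverse x with hadef
  set b := Ring.inverse y with hbdef
  set p := Ring.inverse q with hpdef
  have hax : a * x = 1 := Ring.inverse_mul_cancel x hxu
  have hxa : x * a = 1 := Ring.mul_inverse_cancel x hxu
  have hby : b * y = 1 := Ring.inverse_mul_cancel y hyu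
  have hyb : y * b = 1 := Ring.mul_inverse_cancel y hyu
  have hpq : p * q = 1 := Ring.inverse_mul_cancel q hqu
  have hqp : q * p = 1 := Ring.mul_inverse_cancel q hqu
  have hp : ∀ r : R, p * r = r * p := by
    intro r
    calc p * r = p * r * (q * p) := by rw [hqp, mul_one]
    _ = p * (r * q) * p := by rw [mul_assoc, mul_assoc, mul_assoc]
    _ = p * (q * r) * p := by rw [hq]
    _ = r * p := by rw [← mul_assoc, hpq, one_mul]
  have Hxq : ∀ s : R, x * (q * s) = q * (x * s) := fun s => by
    rw [← mul_assoc, ← hq x, mul_assoc]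
  have hxq : x * q = q * x := (hq x).symm
  have Hxp : ∀ s : R, x * (p * s) = p * (x * s) := fun s => by
    rw [← mul_assoc, ← hp x, mul_assoc]
  have hxp : x * p = p * x := (hp x).symm
  have Hyq : ∀ s : R, y * (q * s) = q * (y * s) := fun s => by
    rw [← mul_assoc, ← hq y, mul_assoc]
  have hyq : y * q = q * y := (hq y).symm
  have Hyp : ∀ s : R, y * (p * s) = p * (y * s) := fun s => by
    rw [← mul_assoc, ← hp y, mul_assoc]
  have hyp : y * p = p * y := (hp y).symm
  have Haq : ∀ s : R, a * (q * s) = q * (a * s) := fun s => by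
    rw [← mul_assoc, ← hq a, mul_assoc]
  have haq : a * q = q * a := (hq a).symm
  have Hap : ∀ s : R, a * (p * s) = p * (a * s) := fun s => by
    rw [← mul_assoc, ← hp a, mul_assoc]
  have hap : a * p = p * a := (hp a).symm
  have Hbq : ∀ s : R, b * (q * s) = q * (b * s) := fun s => by
    rw [← mul_assoc, ← hq b, mul_assoc]
  have hbq : b * q = q * b := (hq b).symm
  have Hbp : ∀ s : R, b * (p * s) = p * (b * s) := fun s => by
    rw [← mul_assoc, ← hp b, mul_assoc]
  have hbp : b * p = p * b := (hp b).symm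
  have Hax : ∀ s : R, a * (x * s) = s := fun s => by rw [← mul_assoc, hax, one_mul]
  have Hxa : ∀ s : R, x * (a * s) = s := fun s => by rw [← mul_assoc, hxa, one_mul]
  have Hby : ∀ s : R, b * (y * s) = s := fun s => by rw [← mul_assoc, hby, one_mul]
  have Hyb : ∀ s : R, y * (b * s) = s := fun s => by rw [← mul_assoc, hyb, one_mul]
  have Hpq : ∀ s : R, p * (q * s) = s := fun s => by rw [← mul_assoc, hpq, one_mul]
  have Hqp : ∀ s : R, q * (p * s) = s := fun s => by rw [← mul_assoc, hqp, one_mul]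
  -- derived commutation relations: sorting order b < y < a < x
  have hay : a * y = q * (y * a) := by
    calc a * y = a * (y * x * a) := by rw [mul_assoc y x a, hxa, mul_one]
    _ = a * (q * (x * y) * a) := by rw [hxy]
    _ = q * (y * a) := by simp only [mul_assoc, Haq, Hax]
  have hxb : x * b = q * (b * x) := by
    calc x * b = b * (y * (x * b)) := (Hby _).symm
    _ = b * (y * x * b) := by rw [mul_assoc]
    _ = b * (q * (x * y) * b) := by rw [hxy]
    _ = q * (b * x) := by simp only [mul_assoc, Hbq, hyb, mul_one, Hyb]
  have hba : b * a = q * (a * b) := by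
    calc b * a = b * (a * y * b) := by rw [mul_assoc a y b, hyb, mul_one]
    _ = b * (q * (y * a) * b) := by rw [hay]
    _ = q * (a * b) := by simp only [mul_assoc, Hbq, Hby]
  have hab : a * b = p * (b * a) := by rw [hba, ← mul_assoc, hpq, one_mul]
  have hxy2 : x * y = p * (y * x) := by rw [hxy, ← mul_assoc, hpq, one_mul]
  have Hay : ∀ s : R, a * (y * s) = q * (y * (a * s)) := fun s => by
    rw [← mul_assoc, hay, mul_assoc, mul_assoc]
  have Hxb : ∀ s : R, x * (b * s) = q * (b * (x * s)) := fun s => by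
    rw [← mul_assoc, hxb, mul_assoc, mul_assoc]
  have Hab : ∀ s : R, a * (b * s) = p * (b * (a * s)) := fun s => by
    rw [← mul_assoc, hab, mul_assoc, mul_assoc]
  have Hxy : ∀ s : R, x * (y * s) = p * (y * (x * s)) := fun s => by
    rw [← mul_assoc, hxy2, mul_assoc, mul_assoc]
  fin_cases t
  · show ((q - x) * b) * y = q - x
    simp only [mul_sub, sub_mul, mul_add, add_mul, mul_neg, neg_mul, neg_neg, mul_one, one_mul,
      mul_assoc, Hxq, hxq, Hxp, hxp, Hyq, hyq, Hyp, hyp, Haq, haq, Hap, hap, Hbq, hbq, Hbp, hbp,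
      Hax, Hxa, Hby, Hyb, Hpq, Hqp, hax, hxa, hby, hyb, hpq, hqp,
      hay, Hay, hxb, Hxb, hab, Hab, hxy2, Hxy]
    try abel
  · show x * (a * (q - y)) = q - y
    simp only [mul_sub, sub_mul, mul_add, add_mul, mul_neg, neg_mul, neg_neg, mul_one, one_mul,
      mul_assoc, Hxq, hxq, Hxp, hxp, Hyq, hyq, Hyp, hyp, Haq, haq, Hap, hap, Hbq, hbq, Hbp, hbp,
      Hax, Hxa, Hby, Hyb, Hpq, Hqp, hax, hxa, hby, hyb, hpq, hqp,
      hay, Hay, hxb, Hxb, hab, Hab, hxy2, Hxy]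
    try abel
  · show y * -(q * (a * ((q - x - y) * b))) = q - a * (q - y)
    simp only [mul_sub, sub_mul, mul_add, add_mul, mul_neg, neg_mul, neg_neg, mul_one, one_mul,
      mul_assoc, Hxq, hxq, Hxp, hxp, Hyq, hyq, Hyp, hyp, Haq, haq, Hap, hap, Hbq, hbq, Hbp, hbp,
      Hax, Hxa, Hby, Hyb, Hpq, Hqp, hax, hxa, hby, hyb, hpq, hqp,
      hay, Hay, hxb, Hxb, hab, Hab, hxy2, Hxy]
    try abel
  · show (a * (q - y)) * ((q - x) * b) = q - -(q * (a * ((q - x - y) * b)))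
    simp only [mul_sub, sub_mul, mul_add, add_mul, mul_neg, neg_mul, neg_neg, mul_one, one_mul,
      mul_assoc, Hxq, hxq, Hxp, hxp, Hyq, hyq, Hyp, hyp, Haq, haq, Hap, hap, Hbq, hbq, Hbp, hbp,
      Hax, Hxa, Hby, Hyb, Hpq, Hqp, hax, hxa, hby, hyb, hpq, hqp,
      hay, Hay, hxb, Hxb, hab, Hab, hxy2, Hxy]
    try abel
  · show -(q * (a * ((q - x - y) * b))) * x = q - (q - x) * b
    simp only [mul_sub, sub_mul, mul_add, add_mul, mul_neg, neg_mul, neg_neg, mul_one, one_mul,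
      mul_assoc, Hxq, hxq, Hxp, hxp, Hyq, hyq, Hyp, hyp, Haq, haq, Hap, hap, Hbq, hbq, Hbp, hbp,
      Hax, Hxa, Hby, Hyb, Hpq, Hqp, hax, hxa, hby, hyb, hpq, hqp,
      hay, Hay, hxb, Hxb, hab, Hab, hxy2, Hxy]
    try abel
end

section
/- If yx = qxy, then the quintuple X_1 = y, X_2 = q x^{-1}, X_3 = -q^2 x^{-1} y^{-1}, X_4 = q y^{-1}, X_5 = x satisfies X_{t+1}X_t = q X_t X_{t+1} for all t \in \mathbb{Z}/5\mathbb{Z}, and moreover X_{t-1}X_{t+1} = q for t \equiv 1, 5 \pmod 5 and X_{t-1}X_{t+1} = -X_t for t \equiv 2, 3, 4 \pmod 5. -/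
/-- If `y x = q x y` with `q` central and invertible and `x`, `y` invertible, the quintuple
`X₁ = y`, `X₂ = q x⁻¹`, `X₃ = -q² x⁻¹ y⁻¹`, `X₄ = q y⁻¹`, `X₅ = x` satisfies
`X_{t+1} X_t = q X_t X_{t+1}` for all `t ∈ ℤ/5ℤ`, and moreover `X_{t-1} X_{t+1} = q`
for `t ≡ 1, 5 (mod 5)` and `X_{t-1} X_{t+1} = -X_t` for `t ≡ 2, 3, 4 (mod 5)`
(the index `0` plays the role of `5`). -/
theorem qX_systems {R : Type*} [Ring R] (q x y : R)
    (hq : ∀ r : R, q * r = r * q) (hqu : IsUnit q) (hxu : IsUnit x) (hyu : IsUnit y)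
    (hxy : y * x = q * (x * y)) :
    let X : ZMod 5 → R := ![x, y, q * Ring.inverse x,
      -(q ^ 2 * (Ring.inverse x * Ring.inverse y)), q * Ring.inverse y]
    (∀ t : ZMod 5, X (t + 1) * X t = q * (X t * X (t + 1))) ∧
    (∀ t : ZMod 5, (t = 1 ∨ t = 0) → X (t - 1) * X (t + 1) = q) ∧
    (∀ t : ZMod 5, (t = 2 ∨ t = 3 ∨ t = 4) → X (t - 1) * X (t + 1) = -X t) := by
  intro X
  set a := Ring.inverse x with ha_def
  set b := Ring.inverse y with hb_def
  have ha : a * x = 1 := Ring.inverse_mul_cancel x hxu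
  have ha' : x * a = 1 := Ring.mul_inverse_cancel x hxu
  have hb : b * y = 1 := Ring.inverse_mul_cancel y hyu
  have hb' : y * b = 1 := Ring.mul_inverse_cancel y hyu
  have hc : ∀ u v : R, u * (q * v) = q * (u * v) := fun u v => by
    rw [← mul_assoc, ← hq, mul_assoc]
  -- commutation relations
  have h1 : a * y = q * (y * a) := by
    calc a * y = a * (y * (x * a)) := by rw [ha', mul_one]
      _ = a * ((y * x) * a) := by rw [← mul_assoc y x a]
      _ = a * ((q * (x * y)) * a) := by rw [hxy]
      _ = a * (q * ((x * y) * a)) := by rw [mul_assoc]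
      _ = q * (a * ((x * y) * a)) := hc _ _
      _ = q * (a * (x * (y * a))) := by rw [mul_assoc x y a]
      _ = q * ((a * x) * (y * a)) := by rw [← mul_assoc a x (y * a)]
      _ = q * (y * a) := by rw [ha, one_mul]
  have h2 : x * b = q * (b * x) := by
    calc x * b = 1 * (x * b) := (one_mul _).symm
      _ = (b * y) * (x * b) := by rw [hb]
      _ = b * ((y * x) * b) := by rw [mul_assoc, ← mul_assoc y x b]
      _ = b * ((q * (x * y)) * b) := by rw [hxy]
      _ = b * (q * ((x * y) * b)) := by rw [mul_assoc]
      _ = q * (b * ((x * y) * b)) := hc _ _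
      _ = q * (b * (x * (y * b))) := by rw [mul_assoc x y b]
      _ = q * (b * (x * 1)) := by rw [hb']
      _ = q * (b * x) := by rw [mul_one]
  have h3 : b * a = q * (a * b) := by
    calc b * a = b * (a * (y * b)) := by rw [hb', mul_one]
      _ = b * ((a * y) * b) := by rw [← mul_assoc a y b]
      _ = b * ((q * (y * a)) * b) := by rw [h1]
      _ = b * (q * ((y * a) * b)) := by rw [mul_assoc]
      _ = q * (b * ((y * a) * b)) := hc _ _
      _ = q * (b * (y * (a * b))) := by rw [mul_assoc y a b]
      _ = q * ((b * y) * (a * b)) := by rw [← mul_assoc b y (a * b)]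
      _ = q * (a * b) := by rw [hb, one_mul]
  have h5 : q * (y * (a * b)) = a := by
    calc q * (y * (a * b)) = (q * (y * a)) * b := by noncomm_ring
      _ = (a * y) * b := by rw [← h1]
      _ = a * (y * b) := by rw [mul_assoc]
      _ = a := by rw [hb', mul_one]
  have h6 : q * (a * (b * x)) = b := by
    calc q * (a * (b * x)) = a * (q * (b * x)) := (hc _ _).symm
      _ = a * (x * b) := by rw [← h2]
      _ = (a * x) * b := by noncomm_ring
      _ = b := by rw [ha, one_mul]
  -- tailed versions for simp
  have hcx : ∀ v : R, x * (q * v) = q * (x * v) := hc x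
  have hcy : ∀ v : R, y * (q * v) = q * (y * v) := hc y
  have hca : ∀ v : R, a * (q * v) = q * (a * v) := hc a
  have hcb : ∀ v : R, b * (q * v) = q * (b * v) := hc b
  have swap : ∀ u v : R, v * u = q * (u * v) → ∀ w, v * (u * w) = q * (u * (v * w)) := by
    intro u v h w
    rw [← mul_assoc, h, mul_assoc, mul_assoc]
  have hxy' := swap x y hxy
  have h1' := swap y a h1
  have h2' := swap b x h2
  have h3' := swap a b h3
  have can : ∀ u v : R, u * v = 1 → ∀ w : R, u * (v * w) = w := by
    intro u v h w; rw [← mul_assoc, h, one_mul]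
  have ca := can a x ha
  have ca' := can x a ha'
  have cb := can b y hb
  have cb' := can y b hb'
  have h5' : ∀ w : R, q * (y * (a * (b * w))) = a * w := by
    intro w
    calc q * (y * (a * (b * w))) = q * (y * (a * b)) * w := by noncomm_ring
      _ = a * w := by rw [h5]
  have h6' : ∀ w : R, q * (a * (b * (x * w))) = b * w := by
    intro w
    calc q * (a * (b * (x * w))) = q * (a * (b * x)) * w := by noncomm_ring
      _ = b * w := by rw [h6]
  refine ⟨?_, ?_, ?_⟩
  · intro t
    have h5c : ∀ s : ZMod 5, s = 0 ∨ s = 1 ∨ s = 2 ∨ s = 3 ∨ s = 4 := by decide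
    rcases h5c t with rfl | rfl | rfl | rfl | rfl
    · show y * x = q * (x * y)
      exact hxy
    · show (q * a) * y = q * (y * (q * a))
      simp only [mul_assoc, mul_neg, neg_mul, neg_neg, neg_inj, mul_one, one_mul, pow_two,
        hcx, hcy, hca, hcb, hxy, hxy', h1, h1', h2, h2', h3, h3', ha, ha', hb, hb',
        ca, ca', cb, cb', h5, h5', h6, h6']
    · show (-(q ^ 2 * (a * b))) * (q * a) = q * ((q * a) * (-(q ^ 2 * (a * b))))
      simp only [mul_assoc, mul_neg, neg_mul, neg_neg, neg_inj, mul_one, one_mul, pow_two,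
        hcx, hcy, hca, hcb, hxy, hxy', h1, h1', h2, h2', h3, h3', ha, ha', hb, hb',
        ca, ca', cb, cb', h5, h5', h6, h6']
    · show (q * b) * (-(q ^ 2 * (a * b))) = q * ((-(q ^ 2 * (a * b))) * (q * b))
      simp only [mul_assoc, mul_neg, neg_mul, neg_neg, neg_inj, mul_one, one_mul, pow_two,
        hcx, hcy, hca, hcb, hxy, hxy', h1, h1', h2, h2', h3, h3', ha, ha', hb, hb',
        ca, ca', cb, cb', h5, h5', h6, h6']
    · show x * (q * b) = q * ((q * b) * x)
      simp only [mul_assoc, mul_neg, neg_mul, neg_neg, neg_inj, mul_one, one_mul, pow_two,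
        hcx, hcy, hca, hcb, hxy, hxy', h1, h1', h2, h2', h3, h3', ha, ha', hb, hb',
        ca, ca', cb, cb', h5, h5', h6, h6']
  · rintro t (rfl | rfl)
    · show x * (q * a) = q
      rw [hc, ha', mul_one]
    · show (q * b) * y = q
      rw [mul_assoc, hb, mul_one]
  · rintro t (rfl | rfl | rfl)
    · show y * (-(q ^ 2 * (a * b))) = -(q * a)
      simp only [mul_assoc, mul_neg, neg_mul, neg_neg, neg_inj, mul_one, one_mul, pow_two,
        hcx, hcy, hca, hcb, hxy, hxy', h1, h1', h2, h2', h3, h3', ha, ha', hb, hb',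
        ca, ca', cb, cb', h5, h5', h6, h6']
    · show (q * a) * (q * b) = -(-(q ^ 2 * (a * b)))
      simp only [mul_assoc, mul_neg, neg_mul, neg_neg, neg_inj, mul_one, one_mul, pow_two,
        hcx, hcy, hca, hcb, hxy, hxy', h1, h1', h2, h2', h3, h3', ha, ha', hb, hb',
        ca, ca', cb, cb', h5, h5', h6, h6']
    · show (-(q ^ 2 * (a * b))) * x = -(q * b)
      simp only [mul_assoc, mul_neg, neg_mul, neg_neg, neg_inj, mul_one, one_mul, pow_two,
        hcx, hcy, hca, hcb, hxy, hxy', h1, h1', h2, h2', h3, h3', ha, ha', hb, hb',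
        ca, ca', cb, cb', h5, h5', h6, h6']
end

section
/- The qX-system X_{t-1}X_{t+1} = q has period four: any sequence (X_t) of invertible elements in a ring with central invertible q satisfying X_{t-1}X_{t+1} = q for all t satisfies X_{t+4} = X_t; and the qX-system X_{t-1}X_{t+1} = -X_t has period six: any sequence of invertible elements satisfying X_{t-1}X_{t+1} = -X_t and X_{t+1}X_t = q X_t X_{t+1} for all t satisfies X_{t+6} = X_t. -/
/-- Periodicity of the qX-systems: in a ring with a central invertible element `q`,
any sequence `(X_t)` of invertible elements satisfying `X_{t-1} X_{t+1} = q` for all `t`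
has period four, `X_{t+4} = X_t`; and any sequence of invertible elements satisfying
`X_{t-1} X_{t+1} = -X_t` and the commutation `X_{t+1} X_t = q X_t X_{t+1}` for all `t`
has period six, `X_{t+6} = X_t`. -/
theorem qX_periodicity {R : Type*} [Ring R] (q : R)
    (hq : ∀ r : R, q * r = r * q) (hqu : IsUnit q) :
    (∀ X : ℤ → R, (∀ t, IsUnit (X t)) →
      (∀ t, X (t - 1) * X (t + 1) = q) → ∀ t, X (t + 4) = X t) ∧
    (∀ X : ℤ → R, (∀ t, IsUnit (X t)) →
      (∀ t, X (t - 1) * X (t + 1) = -X t) →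
      (∀ t, X (t + 1) * X t = q * (X t * X (t + 1))) → ∀ t, X (t + 6) = X t) := by
  constructor
  · intro X hX h t
    have f1 : X t * X (t + 2) = q := by
      have h1 := h (t + 1)
      rwa [show t + 1 - 1 = t by ring, show t + 1 + 1 = t + 2 by ring] at h1
    have f2 : X (t + 2) * X (t + 4) = q := by
      have h1 := h (t + 3)
      rwa [show t + 3 - 1 = t + 2 by ring, show t + 3 + 1 = t + 4 by ring] at h1
    have f3 : X (t + 2) * X t = q := by
      apply (hX t).mul_left_cancel
      rw [← mul_assoc, f1, hq]
    exact (hX (t + 2)).mul_left_cancel (by rw [f2, f3])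
  · intro X hX h hc t
    set a := X t with ha
    set b := X (t + 1) with hb
    have rel : ∀ s : ℤ, X s * X (s + 2) = -X (s + 1) := by
      intro s
      have h1 := h (s + 1)
      rwa [show s + 1 - 1 = s by ring, show s + 1 + 1 = s + 2 by ring] at h1
    have f2 : a * X (t + 2) = -b := rel t
    have f3 : b * X (t + 3) = -X (t + 2) := by
      have := rel (t + 1)
      rwa [show t + 1 + 2 = t + 3 by ring, show t + 1 + 1 = t + 2 by ring] at this
    have f4 : X (t + 2) * X (t + 4) = -X (t + 3) := by
      have := rel (t + 2)
      rwa [show t + 2 + 2 = t + 4 by ring, show t + 2 + 1 = t + 3 by ring] at this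
    have f5 : X (t + 3) * X (t + 5) = -X (t + 4) := by
      have := rel (t + 3)
      rwa [show t + 3 + 2 = t + 5 by ring, show t + 3 + 1 = t + 4 by ring] at this
    have f6 : X (t + 4) * X (t + 6) = -X (t + 5) := by
      have := rel (t + 4)
      rwa [show t + 4 + 2 = t + 6 by ring, show t + 4 + 1 = t + 5 by ring] at this
    have comm : b * a = q * (a * b) := hc t
    have c3 : a * (b * X (t + 3)) = b := by rw [f3, mul_neg, f2, neg_neg]
    have d : b * X (t + 4) = a * X (t + 3) := by
      have e := congrArg (fun r => a * r) f4
      simp only [mul_neg] at e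
      rw [← mul_assoc, f2, neg_mul, neg_inj] at e
      exact e
    have c4 : b * X (t + 4) = q := by
      apply (hX (t + 1)).mul_left_cancel
      show b * (b * X (t + 4)) = b * q
      rw [d, ← mul_assoc, comm, mul_assoc, mul_assoc, c3, hq]
    have c5 : b * X (t + 5) = -(q * a) := by
      have e : a * (b * (X (t + 3) * X (t + 5))) = b * X (t + 5) := by
        rw [← mul_assoc b, ← mul_assoc a, c3]
      calc b * X (t + 5) = a * (b * (X (t + 3) * X (t + 5))) := e.symm
        _ = a * (b * (-X (t + 4))) := by rw [f5]
        _ = -(a * (b * X (t + 4))) := by rw [mul_neg, mul_neg]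
        _ = -(a * q) := by rw [c4]
        _ = -(q * a) := by rw [hq]
    apply hqu.mul_left_cancel
    show q * X (t + 6) = q * a
    calc q * X (t + 6) = (b * X (t + 4)) * X (t + 6) := by rw [c4]
      _ = b * (X (t + 4) * X (t + 6)) := mul_assoc _ _ _
      _ = b * (-X (t + 5)) := by rw [f6]
      _ = -(b * X (t + 5)) := mul_neg _ _
      _ = q * a := by rw [c5, neg_neg]
end
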